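/- Interval-linearizability of write-snapshot executions (core of the correctness of the write-snapshot algorithm): Let E be a well-formed execution over n processes in which each process p_i invokes write_snapshot(i) at most once, and suppose that for each completed operation of a process p_i, returning a set set_i, there exists a position τ_i in E, strictly after the invocation of p_i and strictly before the response of p_i, such that set_i equals exactly the set of indices j whose invocation occurs before position τ_i in E. Then E is interval-linearizable with respect to the write-snapshot interval-sequential object. -/

import Mathlib

/-! ## One-shot executions, interval-sequential objects, interval-linearizability, tasks -/

/-- An event: an invocation of the (single) operation by a process with an input value,
or a response to a process with an output value. -/
inductive Ev (Proc In Out : Type) where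
  | inv (p : Proc) (x : In)
  | res (p : Proc) (y : Out)
deriving DecidableEq

namespace Ev

variable {Proc In Out : Type}

/-- The process issuing/receiving the event. -/
def proc : Ev Proc In Out → Proc
  | .inv p _ => p
  | .res p _ => p

/-- Is the event an invocation? -/
def isInv : Ev Proc In Out → Bool
  | .inv _ _ => true
  | _ => false

/-- Is the event a response? -/
def isRes : Ev Proc In Out → Bool
  | .res _ _ => true
  | _ => false

end Ev

variable {Proc In Out : Type} [DecidableEq Proc] [DecidableEq In] [DecidableEq Out]

/-- Projection of an execution (a finite sequence of events) onto a process. -/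
def projP (E : List (Ev Proc In Out)) (p : Proc) : List (Ev Proc In Out) :=
  E.filter (fun e => decide (e.proc = p))

/-- A well-formed one-shot execution: each process's subsequence is empty, a single
invocation, or an invocation followed by its matching response. -/
def OneShotWF (E : List (Ev Proc In Out)) : Prop :=
  ∀ p : Proc,
    projP E p = [] ∨ (∃ x, projP E p = [Ev.inv p x]) ∨
      ∃ x y, projP E p = [Ev.inv p x, Ev.res p y]

/-- `comp E`: the execution `E` with its pending invocations removed. -/
def comp (E : List (Ev Proc In Out)) : List (Ev Proc In Out) :=
  E.filter (fun e => e.isRes || E.any (fun e' => e'.isRes && decide (e'.proc = e.proc)))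

/-- `Ebar` extends `E` by appending zero or more matching responses to pending
invocations (well-formedness of `Ebar` forces the appended responses to match). -/
def Extension (E Ebar : List (Ev Proc In Out)) : Prop :=
  OneShotWF Ebar ∧ ∃ F, Ebar = E ++ F ∧ ∀ e ∈ F, e.isRes = true

/-- Real-time precedence between the (one-shot) operation calls of processes `p` and `q`
in an execution: the response of `p` occurs before the invocation of `q`. -/
def Prec (E : List (Ev Proc In Out)) (p q : Proc) : Prop :=
  ∃ (i j : ℕ) (y : Out) (x : In),
    i < j ∧ E[i]? = some (Ev.res p y) ∧ E[j]? = some (Ev.inv q x)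

/-- An invoking concurrency class: a nonempty finite set of invocations,
at most one per process. -/
def InvClass (C : Finset (Ev Proc In Out)) : Prop :=
  C.Nonempty ∧ (∀ e ∈ C, e.isInv = true) ∧
    ∀ e ∈ C, ∀ e' ∈ C, e.proc = e'.proc → e = e'

/-- A responding concurrency class: a nonempty finite set of responses,
at most one per process. -/
def ResClass (C : Finset (Ev Proc In Out)) : Prop :=
  C.Nonempty ∧ (∀ e ∈ C, e.isRes = true) ∧
    ∀ e ∈ C, ∀ e' ∈ C, e.proc = e'.proc → e = e'

/-- An interval-sequential execution `I₀,R₀,I₁,R₁,…,I_m,R_m`, represented as a flat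
list of concurrency classes: classes at even positions are invoking, classes at odd
positions are responding, and every response matches an invocation in an earlier
(or simultaneous-round) invoking class with no further invocation by the same
process in between. -/
def IsISExec (h : List (Finset (Ev Proc In Out))) : Prop :=
  h.length % 2 = 0 ∧
  (∀ k C, h[k]? = some C → if k % 2 = 0 then InvClass C else ResClass C) ∧
  (∀ i C r, h[i]? = some C → i % 2 = 1 → r ∈ C →
    ∃ j, j ≤ i ∧ j % 2 = 0 ∧
      (∃ D, h[j]? = some D ∧ ∃ e ∈ D, e.isInv = true ∧ e.proc = r.proc) ∧
      ∀ j' D', j < j' → j' ≤ i → j' % 2 = 0 → h[j']? = some D' →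
        ∀ e ∈ D', e.isInv = true → e.proc ≠ r.proc)

/-- An interval-sequential object: a Mealy automaton whose transitions, from a state
and a (nonempty) invoking concurrency class, produce a (nonempty) responding
concurrency class and a next state; the response uniquely determines the new state. -/
structure ISObject (Proc In Out : Type) where
  State : Type
  init : Set State
  δ : State → Finset (Ev Proc In Out) → Set (Finset (Ev Proc In Out) × State)
  valid : ∀ q I R q', (R, q') ∈ δ q I → InvClass I ∧ ResClass R
  det : ∀ q I R q1 q2, (R, q1) ∈ δ q I → (R, q2) ∈ δ q I → q1 = q2

/-- The interval-sequential specification of an object: all interval-sequential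
executions generated from an initial state by the transition relation. -/
def ISS (O : ISObject Proc In Out) : Set (List (Finset (Ev Proc In Out))) :=
  { h | IsISExec h ∧ ∃ q : ℕ → O.State, q 0 ∈ O.init ∧
      ∀ i I R, h[2*i]? = some I → h[2*i+1]? = some R →
        (R, q (i+1)) ∈ O.δ (q i) I }

/-- Projection of an interval-sequential execution onto a process `p`
(each class contains at most one event of `p`). -/
noncomputable def projPIS (h : List (Finset (Ev Proc In Out))) (p : Proc) : List (Ev Proc In Out) :=
  h.flatMap (fun C => (C.filter (fun e => e.proc = p)).toList)

/-- The interval-sequential execution `h` respects the real-time order of `Ecomp`: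
whenever the operation of `p` precedes that of `q`, every class containing an event
of `p` comes before every class containing an event of `q`. -/
def Respects (Ecomp : List (Ev Proc In Out)) (h : List (Finset (Ev Proc In Out))) : Prop :=
  ∀ p q, Prec Ecomp p q →
    ∀ (k l : ℕ) (C D : Finset (Ev Proc In Out)), h[k]? = some C → h[l]? = some D →
      (∃ e ∈ C, e.proc = p) → (∃ e ∈ D, e.proc = q) → k < l

/-- `E` is interval-linearizable with respect to the object `O`. -/
def IntervalLin (O : ISObject Proc In Out) (E : List (Ev Proc In Out)) : Prop :=
  ∃ Ebar h, Extension E Ebar ∧ h ∈ ISS O ∧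
    (∀ p, projP (comp Ebar) p = projPIS h p) ∧
    Respects (comp Ebar) h

/-- A task `(I, O, Δ)`: pure chromatic `(n-1)`-dimensional input and output complexes
together with a carrier map `Δ`. -/
structure DTask (Proc In Out : Type) [DecidableEq Proc] [DecidableEq In]
    [DecidableEq Out] [Fintype Proc] where
  I : Set (Finset (Proc × In))
  O : Set (Finset (Proc × Out))
  Δ : Finset (Proc × In) → Set (Finset (Proc × Out))
  I_nonempty : I.Nonempty
  I_down : ∀ σ ∈ I, ∀ σ' ⊆ σ, σ' ∈ I
  O_down : ∀ τ ∈ O, ∀ τ' ⊆ τ, τ' ∈ O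
  I_chromatic : ∀ σ ∈ I, ∀ v ∈ σ, ∀ w ∈ σ, (v : Proc × In).1 = w.1 → v = w
  O_chromatic : ∀ τ ∈ O, ∀ v ∈ τ, ∀ w ∈ τ, (v : Proc × Out).1 = w.1 → v = w
  I_pure : ∀ σ ∈ I, ∃ σ' ∈ I, σ ⊆ σ' ∧ σ'.card = Fintype.card Proc
  O_pure : ∀ τ ∈ O, ∃ τ' ∈ O, τ ⊆ τ' ∧ τ'.card = Fintype.card Proc
  Δ_sub : ∀ σ ∈ I, Δ σ ⊆ O
  Δ_nonempty : ∀ σ ∈ I, (Δ σ).Nonempty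
  Δ_down : ∀ σ ∈ I, ∀ τ ∈ Δ σ, ∀ τ' ⊆ τ, τ' ∈ Δ σ
  Δ_pure : ∀ σ ∈ I, ∀ τ ∈ Δ σ, ∃ τ' ∈ Δ σ, τ ⊆ τ' ∧ τ'.card = σ.card
  Δ_ids : ∀ σ ∈ I, ∀ τ ∈ Δ σ, τ.card = σ.card →
    τ.image Prod.fst = σ.image Prod.fst
  Δ_mono : ∀ σ ∈ I, ∀ σ' ⊆ σ, Δ σ' ⊆ Δ σ

/-- `σ_E`: the input simplex of all invocations of an execution. -/
def inputSimplex (E : List (Ev Proc In Out)) : Finset (Proc × In) :=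
  (E.filterMap (fun e => match e with | .inv p x => some (p, x) | _ => none)).toFinset

/-- `τ_E`: the output simplex of all responses of an execution. -/
def outputSimplex (E : List (Ev Proc In Out)) : Finset (Proc × Out) :=
  (E.filterMap (fun e => match e with | .res p y => some (p, y) | _ => none)).toFinset

/-- `E` satisfies the task `T`: for every prefix `E'` of `E`, `τ_{E'} ∈ Δ(σ_{E'})`. -/
def Satisfies [Fintype Proc] (T : DTask Proc In Out) (E : List (Ev Proc In Out)) : Prop :=
  ∀ k, outputSimplex (E.take k) ∈ T.Δ (inputSimplex (E.take k))

/-! ## Statement: the write-snapshot algorithm is interval-linearizable -/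

/-- The write-snapshot interval-sequential object for `n` processes (process `i`
proposes its index `i`, encoded with trivial input `()`): states are pairs
`(vals, pend)`; a transition on an invoking class `I` may return a responding class
`R` whose responses are to pending or currently invoking processes and all return
`vals ∪ ids(I)`, moving to the state `(vals ∪ ids(I), (pend ∪ ids(I)) \ ids(R))`. -/
def wsObject (n : ℕ) : ISObject (Fin n) Unit (Finset (Fin n)) where
  State := Finset (Fin n) × Finset (Fin n)
  init := {(∅, ∅)}
  δ := fun q I =>
    { Rq | InvClass I ∧ ResClass Rq.1 ∧
        (∀ e ∈ Rq.1, Ev.proc e ∈ q.2 ∨ ∃ e' ∈ I, Ev.proc e' = Ev.proc e) ∧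
        (∀ (p : Fin n) (s : Finset (Fin n)), Ev.res p s ∈ Rq.1 →
          s = q.1 ∪ I.image Ev.proc) ∧
        Rq.2.1 = q.1 ∪ I.image Ev.proc ∧
        Rq.2.2 = (q.2 ∪ I.image Ev.proc) \ Rq.1.image Ev.proc }
  valid := by
    rintro q I R q' h
    exact ⟨h.1, h.2.1⟩
  det := by
    rintro q I R q1 q2 h1 h2
    simp only [Set.mem_setOf_eq] at h1 h2
    obtain ⟨-, -, -, -, a1, b1⟩ := h1
    obtain ⟨-, -, -, -, a2, b2⟩ := h2
    cases q1; cases q2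
    simp only [Prod.mk.injEq]
    exact ⟨a1.trans a2.symm, b1.trans b2.symm⟩

/-!
The snapshots returned in `E` have the form "indices invoked before time `t`", so they form a
chain `s₀ ⊂ s₁ ⊂ ⋯ ⊂ s_{m-1}`. Round `k` of the interval-sequential execution invokes the
processes that first appear in `s_k`, and answers `s_k` to the processes whose snapshot is `s_k`
together with the pending processes first appearing in `s_k`, whose responses are appended to `E`;
pending processes seen by no snapshot are dropped. If the response of `p` precedes the invocation
of `q`, then `q` is not in the snapshot of `p`, so `p` responds in an earlier round than the one in
which `q` is invoked.
-/

section Executions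

variable {ι α β : Type} [DecidableEq ι]

theorem projP_append (E F : List (Ev ι α β)) (p : ι) :
    projP (E ++ F) p = projP E p ++ projP F p :=
  List.filter_append ..

open Classical in
theorem projP_comp (E : List (Ev ι α β)) (p : ι) :
    projP (comp E) p = if ∃ y, Ev.res p y ∈ E then projP E p else [] := by
  have hres : (∃ e ∈ E, e.isRes = true ∧ e.proc = p) ↔ ∃ y, Ev.res p y ∈ E := by
    constructor
    · rintro ⟨_ | ⟨q, y⟩, he, hr, rfl⟩
      · simp [Ev.isRes] at hr
      · exact ⟨y, he⟩
    · rintro ⟨y, hy⟩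
      exact ⟨_, hy, rfl, rfl⟩
  unfold comp projP
  rw [List.filter_filter]
  split_ifs with h
  · refine List.filter_congr fun e _ => ?_
    by_cases hep : e.proc = p
    · simp [hep, hres.2 h]
    · simp [hep]
  · refine List.filter_eq_nil_iff.2 fun e he => ?_
    simp only [Bool.and_eq_true, Bool.or_eq_true, decide_eq_true_eq, List.any_eq_true, not_and]
    rintro rfl (hr | hr)
    · exact h (hres.1 ⟨e, he, hr, rfl⟩)
    · exact h (hres.1 hr)

theorem projP_map_res (P : Finset ι) (v : ι → β) (p : ι) :
    projP (P.toList.map fun q => (Ev.res q (v q) : Ev ι α β)) p =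
      if p ∈ P then [Ev.res p (v p)] else [] := by
  have hfilter : P.toList.filter (· = p) = if p ∈ P then [p] else [] := by
    rw [List.filter_eq]
    split_ifs with hp
    · rw [List.count_eq_one_of_mem P.nodup_toList (Finset.mem_toList.2 hp), List.replicate_one]
    · rw [List.count_eq_zero_of_not_mem (mt Finset.mem_toList.1 hp), List.replicate_zero]
  rw [projP, List.filter_map]
  change (P.toList.filter (· = p)).map _ = _
  rw [hfilter]
  split_ifs <;> rfl

theorem OneShotWF.nodup {E : List (Ev ι α β)} (hwf : OneShotWF E) : E.Nodup := by
  classical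
  refine List.nodup_iff_count_le_one.2 fun e => ?_
  rw [← List.count_filter (p := fun e' => decide (e'.proc = e.proc)) (by simp)]
  rcases hwf e.proc with h | ⟨x, h⟩ | ⟨x, y, h⟩ <;> rw [projP] at h <;>
    simp only [h, List.count_cons, List.count_nil, beq_iff_eq]
  · omega
  · split_ifs <;> omega
  · split_ifs with h1 h2 <;> first | omega | exact absurd (h1.trans h2.symm) (by simp)

theorem OneShotWF.getElem?_inj {E : List (Ev ι α β)} (hwf : OneShotWF E) {i j : ℕ}
    {e : Ev ι α β} (hi : E[i]? = some e) (hj : E[j]? = some e) : i = j :=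
  (List.getElem?_inj (List.getElem?_eq_some_iff.1 hi).1 hwf.nodup).1 (hi.trans hj.symm)

theorem OneShotWF.projP_eq_of_res {E : List (Ev ι α β)} (hwf : OneShotWF E) {p : ι} {y : β}
    (h : Ev.res p y ∈ E) : ∃ x, projP E p = [Ev.inv p x, Ev.res p y] := by
  have hmem : Ev.res p y ∈ projP E p := List.mem_filter.2 ⟨h, by simp [Ev.proc]⟩
  rcases hwf p with h' | ⟨x, h'⟩ | ⟨x, y', h'⟩ <;> rw [h'] at hmem ⊢
  · simp at hmem
  · simp at hmem
  · simp only [List.mem_cons, reduceCtorEq, Ev.res.injEq, true_and, List.not_mem_nil,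
      or_false, false_or] at hmem
    exact ⟨x, by rw [hmem]⟩

theorem OneShotWF.res_unique {E : List (Ev ι α β)} (hwf : OneShotWF E) {p : ι} {y y' : β}
    (h : Ev.res p y ∈ E) (h' : Ev.res p y' ∈ E) : y' = y := by
  obtain ⟨x, hx⟩ := hwf.projP_eq_of_res h
  have hmem : Ev.res p y' ∈ projP E p := List.mem_filter.2 ⟨h', by simp [Ev.proc]⟩
  simpa [hx] using hmem

theorem OneShotWF.projP_eq_of_not_res {E : List (Ev ι α β)} (hwf : OneShotWF E) {p : ι} {x : α}
    (h : Ev.inv p x ∈ E) (hno : ¬∃ y, Ev.res p y ∈ E) : projP E p = [Ev.inv p x] := by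
  have hmem : Ev.inv p x ∈ projP E p := List.mem_filter.2 ⟨h, by simp [Ev.proc]⟩
  rcases hwf p with h' | ⟨x', h'⟩ | ⟨x', y, h'⟩ <;> rw [h'] at hmem ⊢
  · simp at hmem
  · simp_all
  · have : Ev.res p y ∈ projP E p := by simp [h']
    exact absurd ⟨y, (List.mem_filter.1 this).1⟩ hno

end Executions

section Precedence

variable {ι α β : Type}

theorem Prec.of_sublist {E E' : List (Ev ι α β)} {p q : ι} (h : Prec E p q) (hs : E.Sublist E') :
    Prec E' p q := by
  obtain ⟨f, hf⟩ := List.sublist_iff_exists_orderEmbedding_getElem?_eq.1 hs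
  obtain ⟨i, j, y, x, hij, hi, hj⟩ := h
  exact ⟨f i, f j, y, x, f.lt_iff_lt.2 hij, (hf i).symm.trans hi, (hf j).symm.trans hj⟩

theorem Prec.of_append_responses {E F : List (Ev ι α β)} {p q : ι} (h : Prec (E ++ F) p q)
    (hF : ∀ e ∈ F, e.isRes = true) : Prec E p q := by
  obtain ⟨i, j, y, x, hij, hi, hj⟩ := h
  have hjE : j < E.length := by
    by_contra hjE
    rw [List.getElem?_append_right (by omega)] at hj
    simpa [Ev.isRes] using hF _ (List.mem_of_getElem? hj)
  rw [List.getElem?_append_left (by omega)] at hi hj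
  exact ⟨i, j, y, x, hij, hi, hj⟩

end Precedence

theorem List.flatMap_range_ite_append_ite {γ : Type*} (x y : γ) {a b : ℕ} (hab : a < b) (N : ℕ) :
    (List.range N).flatMap (fun i => (if i = a then [x] else []) ++ (if i = b then [y] else [])) =
      (if a < N then [x] else []) ++ (if b < N then [y] else []) := by
  induction N with
  | zero => simp
  | succ N ih =>
    rw [List.range_succ, List.flatMap_append, ih, List.flatMap_singleton]
    split_ifs <;> first | rfl | omega

theorem List.mem_getElem_iff_findIdx_le {α : Type*} [DecidableEq α] {L : List (Finset α)}
    (hL : L.Pairwise (· ⊆ ·)) {k : ℕ} (hk : k < L.length) {a : α} :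
    a ∈ L[k] ↔ L.findIdx (a ∈ ·) ≤ k := by
  constructor
  · intro ha
    by_contra hlt
    simpa [ha] using List.not_of_lt_findIdx (not_le.1 hlt)
  · intro hle
    have hlt : L.findIdx (a ∈ ·) < L.length := by omega
    have ha : a ∈ L[L.findIdx (a ∈ ·)] := by simpa using List.findIdx_getElem (w := hlt)
    rcases hle.lt_or_eq with h | h
    · exact List.pairwise_iff_getElem.1 hL _ _ hlt hk h ha
    · simpa [h] using ha

theorem Finset.pairwise_ssubset_mergeSort_card {α : Type*} {S : Finset (Finset α)}
    (hS : IsChain (· ⊆ ·) (S : Set (Finset α))) :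
    (S.toList.mergeSort fun s t => decide (s.card ≤ t.card)).Pairwise (· ⊂ ·) := by
  have hperm := List.mergeSort_perm S.toList fun s t => decide (s.card ≤ t.card)
  have hsorted := List.pairwise_mergeSort (le := fun s t : Finset α => decide (s.card ≤ t.card))
    (by simp only [decide_eq_true_eq]; omega)
    (by simp only [Bool.or_eq_true, decide_eq_true_eq]; omega) S.toList
  refine (hsorted.and (hperm.nodup_iff.2 S.nodup_toList)).imp_of_mem
    fun {a b} ha hb ⟨hcard, hne⟩ => ?_
  have ha' : a ∈ S := Finset.mem_toList.1 (hperm.mem_iff.1 ha)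
  have hb' : b ∈ S := Finset.mem_toList.1 (hperm.mem_iff.1 hb)
  rcases hS.total ha' hb' with h | h
  · exact Finset.ssubset_iff_subset_ne.2 ⟨h, hne⟩
  · exact absurd (Finset.eq_of_subset_of_card_le h (by simpa using hcard)).symm hne

namespace WriteSnapshot

abbrev Event (n : ℕ) := Ev (Fin n) Unit (Finset (Fin n))

variable {n : ℕ} (inv ret : Fin n → ℕ)

def view (k : ℕ) : Finset (Fin n) := {p | inv p ≤ k}

def invClass (k : ℕ) : Finset (Event n) :=
  ({p | inv p = k} : Finset (Fin n)).image (Ev.inv · ())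

def resClass (k : ℕ) : Finset (Event n) :=
  ({p | ret p = k} : Finset (Fin n)).image (Ev.res · (view inv k))

def roundClass (i : ℕ) : Finset (Event n) :=
  if i % 2 = 0 then invClass inv (i / 2) else resClass inv ret (i / 2)

def roundHistory (m : ℕ) : List (Finset (Event n)) :=
  (List.range (2 * m)).map (roundClass inv ret)

def roundState (k : ℕ) : Finset (Fin n) × Finset (Fin n) :=
  (({p | inv p < k} : Finset (Fin n)), ({p | inv p < k ∧ k ≤ ret p} : Finset (Fin n)))

/-- Process `p` is invoked in round `inv p` and responds in round `ret p`; it takes no part in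
the `m` rounds when `m ≤ inv p`. -/
structure IsRoundAssignment (m : ℕ) : Prop where
  inv_le_ret : ∀ p, inv p ≤ ret p
  ret_lt_of_inv_lt : ∀ p, inv p < m → ret p < m
  exists_inv_eq : ∀ k < m, ∃ p, inv p = k
  exists_ret_eq : ∀ k < m, ∃ p, ret p = k

variable {inv ret}

@[simp] theorem mem_view {k : ℕ} {p : Fin n} : p ∈ view inv k ↔ inv p ≤ k := by simp [view]

theorem mem_invClass {k : ℕ} {e : Event n} :
    e ∈ invClass inv k ↔ ∃ p, inv p = k ∧ e = .inv p () := by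
  simp [invClass, eq_comm]

theorem mem_resClass {k : ℕ} {e : Event n} :
    e ∈ resClass inv ret k ↔ ∃ p, ret p = k ∧ e = .res p (view inv k) := by
  simp [resClass, eq_comm]

theorem image_proc_invClass (k : ℕ) :
    (invClass inv k).image Ev.proc = ({p | inv p = k} : Finset (Fin n)) := by
  ext p; simp [invClass, Ev.proc]

theorem image_proc_resClass (k : ℕ) :
    (resClass inv ret k).image Ev.proc = ({p | ret p = k} : Finset (Fin n)) := by
  ext p; simp [resClass, Ev.proc]

theorem getElem?_roundHistory_eq_some {m i : ℕ} {C : Finset (Event n)} :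
    (roundHistory inv ret m)[i]? = some C ↔ i < 2 * m ∧ roundClass inv ret i = C := by
  by_cases hi : i < 2 * m <;> simp [roundHistory, hi]

theorem filter_proc_invClass (k : ℕ) (p : Fin n) :
    (invClass inv k).filter (·.proc = p) = if inv p = k then {.inv p ()} else ∅ := by
  ext e
  simp only [Finset.mem_filter, mem_invClass]
  split_ifs with h <;> simp only [Finset.mem_singleton, Finset.notMem_empty, iff_false, not_and]
  · constructor
    · rintro ⟨⟨q, rfl, rfl⟩, rfl⟩
      rfl
    · rintro rfl
      exact ⟨⟨p, h, rfl⟩, rfl⟩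
  · rintro ⟨q, rfl, rfl⟩ rfl
    exact h rfl

theorem filter_proc_resClass (k : ℕ) (p : Fin n) :
    (resClass inv ret k).filter (·.proc = p) =
      if ret p = k then {.res p (view inv k)} else ∅ := by
  ext e
  simp only [Finset.mem_filter, mem_resClass]
  split_ifs with h <;> simp only [Finset.mem_singleton, Finset.notMem_empty, iff_false, not_and]
  · constructor
    · rintro ⟨⟨q, rfl, rfl⟩, rfl⟩
      rfl
    · rintro rfl
      exact ⟨⟨p, h, rfl⟩, rfl⟩
  · rintro ⟨q, rfl, rfl⟩ rfl
    exact h rfl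

theorem toList_filter_proc_roundClass (i : ℕ) (p : Fin n) :
    ((roundClass inv ret i).filter (·.proc = p)).toList =
      (if i = 2 * inv p then [.inv p ()] else []) ++
        (if i = 2 * ret p + 1 then [.res p (view inv (ret p))] else []) := by
  by_cases hi : i % 2 = 0
  · rw [roundClass, if_pos hi, filter_proc_invClass, if_neg (by omega : i ≠ 2 * ret p + 1),
      List.append_nil]
    by_cases h : inv p = i / 2
    · rw [if_pos h, if_pos (by omega), Finset.toList_singleton]
    · rw [if_neg h, if_neg (by omega), Finset.toList_empty]
  · rw [roundClass, if_neg hi, filter_proc_resClass, if_neg (by omega : i ≠ 2 * inv p),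
      List.nil_append]
    by_cases h : ret p = i / 2
    · rw [if_pos h, if_pos (by omega), Finset.toList_singleton, h]
    · rw [if_neg h, if_neg (by omega), Finset.toList_empty]

theorem projPIS_roundHistory {p : Fin n} (hp : inv p ≤ ret p) (m : ℕ) :
    projPIS (roundHistory inv ret m) p =
      (if inv p < m then [.inv p ()] else []) ++
        (if ret p < m then [.res p (view inv (ret p))] else []) := by
  rw [projPIS, roundHistory, List.flatMap_map]
  simp only [toList_filter_proc_roundClass]
  rw [List.flatMap_range_ite_append_ite _ _ (by omega)]
  simp only [Nat.mul_lt_mul_left two_pos, show ∀ k, 2 * k + 1 < 2 * m ↔ k < m by omega]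

theorem invClass_isInvClass {k : ℕ} (h : ∃ p, inv p = k) : InvClass (invClass inv k) := by
  obtain ⟨p, hp⟩ := h
  refine ⟨⟨_, mem_invClass.2 ⟨p, hp, rfl⟩⟩, fun e he => ?_, fun e he e' he' hproc => ?_⟩
  · obtain ⟨q, -, rfl⟩ := mem_invClass.1 he
    rfl
  · obtain ⟨q, -, rfl⟩ := mem_invClass.1 he
    obtain ⟨q', -, rfl⟩ := mem_invClass.1 he'
    cases hproc
    rfl

theorem resClass_isResClass {k : ℕ} (h : ∃ p, ret p = k) : ResClass (resClass inv ret k) := by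
  obtain ⟨p, hp⟩ := h
  refine ⟨⟨_, mem_resClass.2 ⟨p, hp, rfl⟩⟩, fun e he => ?_, fun e he e' he' hproc => ?_⟩
  · obtain ⟨q, -, rfl⟩ := mem_resClass.1 he
    rfl
  · obtain ⟨q, -, rfl⟩ := mem_resClass.1 he
    obtain ⟨q', -, rfl⟩ := mem_resClass.1 he'
    cases hproc
    rfl

theorem bounds_of_mem_roundClass (hle : ∀ p, inv p ≤ ret p) {i : ℕ} {e : Event n}
    (he : e ∈ roundClass inv ret i) : 2 * inv e.proc ≤ i ∧ i ≤ 2 * ret e.proc + 1 := by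
  rw [roundClass] at he
  split_ifs at he
  · obtain ⟨p, hp, rfl⟩ := mem_invClass.1 he
    have := hle p
    simp only [Ev.proc]
    omega
  · obtain ⟨p, hp, rfl⟩ := mem_resClass.1 he
    have := hle p
    simp only [Ev.proc]
    omega

theorem respects_roundHistory (hle : ∀ p, inv p ≤ ret p) {X : List (Event n)} {m : ℕ}
    (hX : ∀ p q, Prec X p q → ret p < inv q) : Respects X (roundHistory inv ret m) := by
  rintro p q hpq k l C D hC hD ⟨e, he, rfl⟩ ⟨e', he', rfl⟩
  obtain ⟨-, rfl⟩ := getElem?_roundHistory_eq_some.1 hC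
  obtain ⟨-, rfl⟩ := getElem?_roundHistory_eq_some.1 hD
  have := bounds_of_mem_roundClass hle he
  have := bounds_of_mem_roundClass hle he'
  have := hX _ _ hpq
  omega

variable {m : ℕ}

theorem isISExec_roundHistory (hA : IsRoundAssignment inv ret m) :
    IsISExec (roundHistory inv ret m) := by
  refine ⟨by simp [roundHistory], fun k C hC => ?_, fun i C r hC hi hr => ?_⟩
  · obtain ⟨hk, rfl⟩ := getElem?_roundHistory_eq_some.1 hC
    rw [roundClass]
    split_ifs
    · exact invClass_isInvClass (hA.exists_inv_eq _ (by omega))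
    · exact resClass_isResClass (hA.exists_ret_eq _ (by omega))
  · obtain ⟨hi2, rfl⟩ := getElem?_roundHistory_eq_some.1 hC
    rw [roundClass, if_neg (by omega)] at hr
    obtain ⟨p, hp, rfl⟩ := mem_resClass.1 hr
    have hinv := hA.inv_le_ret p
    refine ⟨2 * inv p, by omega, by omega,
      ⟨invClass inv (inv p), ?_, .inv p (), mem_invClass.2 ⟨p, rfl, rfl⟩, rfl, rfl⟩, ?_⟩
    · exact getElem?_roundHistory_eq_some.2 ⟨by omega, by simp [roundClass]⟩
    · intro j D hj hji hj2 hD e he _ hproc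
      obtain ⟨-, rfl⟩ := getElem?_roundHistory_eq_some.1 hD
      rw [roundClass, if_pos hj2] at he
      obtain ⟨q, hq, rfl⟩ := mem_invClass.1 he
      cases hproc
      omega

theorem roundState_step (hA : IsRoundAssignment inv ret m) {k : ℕ} (hk : k < m) :
    (resClass inv ret k, roundState inv ret (k + 1)) ∈
      (wsObject n).δ (roundState inv ret k) (invClass inv k) := by
  have hle := hA.inv_le_ret
  refine ⟨invClass_isInvClass (hA.exists_inv_eq k hk), resClass_isResClass (hA.exists_ret_eq k hk),
    fun e he => ?_, fun p s hs => ?_, ?_, ?_⟩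
  · obtain ⟨p, hp, rfl⟩ := mem_resClass.1 he
    rcases (hle p).lt_or_eq with h | h
    · left
      simp only [roundState, Ev.proc, Finset.mem_filter, Finset.mem_univ, true_and]
      omega
    · right
      exact ⟨.inv p (), mem_invClass.2 ⟨p, h.trans hp, rfl⟩, rfl⟩
  · obtain ⟨q, -, h⟩ := mem_resClass.1 hs
    cases h
    ext
    simp only [image_proc_invClass, roundState, mem_view, Finset.mem_union, Finset.mem_filter,
      Finset.mem_univ, true_and]
    omega
  · ext
    simp only [image_proc_invClass, roundState, Finset.mem_union, Finset.mem_filter,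
      Finset.mem_univ, true_and]
    omega
  · ext p
    simp only [image_proc_invClass, image_proc_resClass, roundState, Finset.mem_sdiff,
      Finset.mem_union, Finset.mem_filter, Finset.mem_univ, true_and]
    have := hle p
    omega

theorem roundHistory_mem_ISS (hA : IsRoundAssignment inv ret m) :
    roundHistory inv ret m ∈ ISS (wsObject n) := by
  refine ⟨isISExec_roundHistory hA, roundState inv ret,
    (by simp [roundState] : roundState inv ret 0 = (∅, ∅)), fun k I R hI hR => ?_⟩
  obtain ⟨hk, rfl⟩ := getElem?_roundHistory_eq_some.1 hI
  obtain ⟨-, rfl⟩ := getElem?_roundHistory_eq_some.1 hR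
  rw [roundClass, roundClass, if_pos (by omega), if_neg (by omega),
    show 2 * k / 2 = k by omega, show (2 * k + 1) / 2 = k by omega]
  exact roundState_step hA (by omega)

variable {E : List (Event n)}

def invokedBefore (E : List (Event n)) (t : ℕ) : Finset (Fin n) :=
  {j | ∃ c < t, E[c]? = some (.inv j ())}

@[simp] theorem mem_invokedBefore {t : ℕ} {j : Fin n} :
    j ∈ invokedBefore E t ↔ ∃ c < t, E[c]? = some (.inv j ()) := by
  simp [invokedBefore]

theorem invokedBefore_mono (E : List (Event n)) : Monotone (invokedBefore E) :=
  fun _ _ htt' _ hj => by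
    obtain ⟨c, hc, hcj⟩ := mem_invokedBefore.1 hj
    exact mem_invokedBefore.2 ⟨c, by omega, hcj⟩

def HasSnapshotPoints (E : List (Event n)) : Prop :=
  ∀ (i : Fin n) (s : Finset (Fin n)), Ev.res i s ∈ E →
    ∃ t : ℕ,
      (∃ a : ℕ, a < t ∧ E[a]? = some (Ev.inv i ())) ∧
      (∃ b : ℕ, t < b ∧ E[b]? = some (Ev.res i s)) ∧
      (∀ j : Fin n, j ∈ s ↔ ∃ c : ℕ, c < t ∧ E[c]? = some (Ev.inv j ()))

theorem HasSnapshotPoints.exists_eq_invokedBefore (hsnap : HasSnapshotPoints E) {p : Fin n}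
    {s : Finset (Fin n)} (h : Ev.res p s ∈ E) :
    ∃ t, s = invokedBefore E t ∧ ∃ b, t < b ∧ E[b]? = some (.res p s) := by
  obtain ⟨t, -, hb, hs⟩ := hsnap p s h
  exact ⟨t, Finset.ext fun j => (hs j).trans mem_invokedBefore.symm, hb⟩

theorem HasSnapshotPoints.self_mem (hsnap : HasSnapshotPoints E) {p : Fin n}
    {s : Finset (Fin n)} (h : Ev.res p s ∈ E) : p ∈ s := by
  obtain ⟨t, ⟨a, hat, ha⟩, -, hs⟩ := hsnap p s h
  exact (hs p).2 ⟨a, hat, ha⟩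

theorem HasSnapshotPoints.inv_mem (hsnap : HasSnapshotPoints E) {p q : Fin n}
    {s : Finset (Fin n)} (h : Ev.res q s ∈ E) (hp : p ∈ s) : Ev.inv p () ∈ E := by
  obtain ⟨t, rfl, -⟩ := hsnap.exists_eq_invokedBefore h
  obtain ⟨c, -, hc⟩ := mem_invokedBefore.1 hp
  exact List.mem_of_getElem? hc

def snapshots (E : List (Event n)) : Finset (Finset (Fin n)) := {s | ∃ p, Ev.res p s ∈ E}

noncomputable def snapshotRounds (E : List (Event n)) : List (Finset (Fin n)) :=
  (snapshots E).toList.mergeSort fun s t => decide (s.card ≤ t.card)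

theorem mem_snapshotRounds {s : Finset (Fin n)} :
    s ∈ snapshotRounds E ↔ ∃ p, Ev.res p s ∈ E := by
  simp [snapshotRounds, snapshots]

theorem HasSnapshotPoints.isChain_snapshots (hsnap : HasSnapshotPoints E) :
    IsChain (· ⊆ ·) (snapshots E : Set (Finset (Fin n))) := by
  intro s hs s' hs' _
  obtain ⟨p, hp⟩ := by simpa [snapshots] using hs
  obtain ⟨p', hp'⟩ := by simpa [snapshots] using hs'
  obtain ⟨t, rfl, -⟩ := hsnap.exists_eq_invokedBefore hp
  obtain ⟨t', rfl, -⟩ := hsnap.exists_eq_invokedBefore hp'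
  rcases le_total t t' with h | h
  · exact Or.inl (invokedBefore_mono E h)
  · exact Or.inr (invokedBefore_mono E h)

theorem HasSnapshotPoints.pairwise_snapshotRounds (hsnap : HasSnapshotPoints E) :
    (snapshotRounds E).Pairwise (· ⊂ ·) :=
  Finset.pairwise_ssubset_mergeSort_card hsnap.isChain_snapshots

/-- `(snapshotRounds E).length` when no snapshot contains `p`. -/
noncomputable def invRound (E : List (Event n)) (p : Fin n) : ℕ :=
  (snapshotRounds E).findIdx (p ∈ ·)

noncomputable def retRound (E : List (Event n)) (p : Fin n) : ℕ :=
  if ∃ s, Ev.res p s ∈ E then (snapshotRounds E).findIdx (Ev.res p · ∈ E) else invRound E p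

theorem HasSnapshotPoints.view_invRound (hsnap : HasSnapshotPoints E) {k : ℕ}
    (hk : k < (snapshotRounds E).length) : view (invRound E) k = (snapshotRounds E)[k] := by
  ext p
  rw [mem_view, invRound,
    List.mem_getElem_iff_findIdx_le (hsnap.pairwise_snapshotRounds.imp subset_of_ssubset) hk]

theorem invRound_lt_length {p : Fin n} {s : Finset (Fin n)} (hs : s ∈ snapshotRounds E)
    (hp : p ∈ s) : invRound E p < (snapshotRounds E).length :=
  List.findIdx_lt_length_of_exists ⟨s, hs, by simpa using hp⟩

theorem exists_res_of_invRound_lt {p : Fin n} (hp : invRound E p < (snapshotRounds E).length) :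
    ∃ q s, Ev.res q s ∈ E ∧ p ∈ s := by
  rw [invRound] at hp
  obtain ⟨q, hq⟩ := mem_snapshotRounds.1 (List.getElem_mem hp)
  exact ⟨q, _, hq, by simpa using List.findIdx_getElem (w := hp)⟩

theorem retRound_spec (hwf : OneShotWF E) {p : Fin n} {s : Finset (Fin n)}
    (h : Ev.res p s ∈ E) :
    ∃ hk : retRound E p < (snapshotRounds E).length, (snapshotRounds E)[retRound E p] = s := by
  have hlt : (snapshotRounds E).findIdx (Ev.res p · ∈ E) < (snapshotRounds E).length :=
    List.findIdx_lt_length_of_exists ⟨s, mem_snapshotRounds.2 ⟨p, h⟩, by simpa using h⟩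
  simp only [retRound, if_pos (⟨s, h⟩ : ∃ s, Ev.res p s ∈ E)]
  exact ⟨hlt, hwf.res_unique h (by simpa using List.findIdx_getElem (w := hlt))⟩

theorem view_retRound (hwf : OneShotWF E) (hsnap : HasSnapshotPoints E) {p : Fin n}
    {s : Finset (Fin n)} (h : Ev.res p s ∈ E) : view (invRound E) (retRound E p) = s := by
  obtain ⟨hk, hs⟩ := retRound_spec hwf h
  rw [hsnap.view_invRound hk, hs]

theorem exists_invRound_eq (hsnap : HasSnapshotPoints E) {k : ℕ}
    (hk : k < (snapshotRounds E).length) : ∃ p, invRound E p = k := by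
  have hchain := hsnap.pairwise_snapshotRounds
  have hnew : ∃ p ∈ (snapshotRounds E)[k], ∀ j (hj : j < k), p ∉ (snapshotRounds E)[j] := by
    cases k with
    | zero =>
      obtain ⟨q, hq⟩ := mem_snapshotRounds.1 (List.getElem_mem hk)
      exact ⟨q, hsnap.self_mem hq, fun j hj => absurd hj (Nat.not_lt_zero j)⟩
    | succ k =>
      obtain ⟨p, hpk, hpk'⟩ := Finset.exists_of_ssubset
        (List.pairwise_iff_getElem.1 hchain k (k + 1) (by omega) hk (by omega))
      refine ⟨p, hpk, fun j hj hpj => hpk' ?_⟩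
      rcases (Nat.le_of_lt_succ hj).lt_or_eq with h | rfl
      · exact List.pairwise_iff_getElem.1 hchain j k (by omega) (by omega) h |>.subset hpj
      · exact hpj
  obtain ⟨p, hpk, hpj⟩ := hnew
  exact ⟨p, (List.findIdx_eq hk).2 ⟨by simpa using hpk, fun j hj => by simpa using hpj j hj⟩⟩

theorem isRoundAssignment (hwf : OneShotWF E) (hsnap : HasSnapshotPoints E) :
    IsRoundAssignment (invRound E) (retRound E) (snapshotRounds E).length where
  inv_le_ret p := by
    by_cases h : ∃ s, Ev.res p s ∈ E
    · obtain ⟨s, hs⟩ := h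
      rw [← mem_view, view_retRound hwf hsnap hs]
      exact hsnap.self_mem hs
    · simp [retRound, h]
  ret_lt_of_inv_lt p hp := by
    by_cases h : ∃ s, Ev.res p s ∈ E
    · exact (retRound_spec hwf h.choose_spec).1
    · simpa [retRound, h] using hp
  exists_inv_eq _ := exists_invRound_eq hsnap
  exists_ret_eq k hk := by
    obtain ⟨p, hp⟩ := mem_snapshotRounds.1 (List.getElem_mem hk)
    obtain ⟨_, hs⟩ := retRound_spec hwf hp
    have hnodup := hsnap.pairwise_snapshotRounds.imp ne_of_ssubset
    exact ⟨p, (List.Nodup.getElem_inj_iff hnodup).1 hs⟩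

theorem retRound_lt_invRound_of_prec (hwf : OneShotWF E) (hsnap : HasSnapshotPoints E)
    {p q : Fin n} (h : Prec E p q) : retRound E p < invRound E q := by
  obtain ⟨i, j, s, ⟨⟩, hij, hi, hj⟩ := h
  have hs : Ev.res p s ∈ E := List.mem_of_getElem? hi
  obtain ⟨t, rfl, b, htb, hb⟩ := hsnap.exists_eq_invokedBefore hs
  have hib : i = b := hwf.getElem?_inj hi hb
  by_contra hle
  have hq : q ∈ invokedBefore E t := by
    rw [← view_retRound hwf hsnap hs, mem_view]
    omega
  obtain ⟨c, hct, hc⟩ := mem_invokedBefore.1 hq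
  have hcj : c = j := hwf.getElem?_inj hc hj
  omega

noncomputable def seenPending (E : List (Event n)) : Finset (Fin n) :=
  {p | (¬∃ s, Ev.res p s ∈ E) ∧ invRound E p < (snapshotRounds E).length}

theorem mem_seenPending {p : Fin n} :
    p ∈ seenPending E ↔ (¬∃ s, Ev.res p s ∈ E) ∧ invRound E p < (snapshotRounds E).length := by
  simp [seenPending]

noncomputable def completion (E : List (Event n)) : List (Event n) :=
  (seenPending E).toList.map fun p => .res p (view (invRound E) (invRound E p))

theorem isRes_of_mem_completion {e : Event n} (he : e ∈ completion E) : e.isRes = true := by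
  obtain ⟨p, -, rfl⟩ := List.mem_map.1 he
  rfl

theorem exists_res_append_completion_iff (hsnap : HasSnapshotPoints E) {p : Fin n} :
    (∃ y, Ev.res p y ∈ E ++ completion E) ↔ invRound E p < (snapshotRounds E).length := by
  constructor
  · rintro ⟨y, hy⟩
    rcases List.mem_append.1 hy with hy | hy
    · exact invRound_lt_length (mem_snapshotRounds.2 ⟨p, hy⟩) (hsnap.self_mem hy)
    · obtain ⟨q, hq, hqp⟩ := List.mem_map.1 hy
      cases hqp
      exact (mem_seenPending.1 (Finset.mem_toList.1 hq)).2
  · intro hp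
    by_cases h : ∃ s, Ev.res p s ∈ E
    · obtain ⟨s, hs⟩ := h
      exact ⟨s, List.mem_append_left _ hs⟩
    · have hseen : p ∈ (seenPending E).toList := Finset.mem_toList.2 (mem_seenPending.2 ⟨h, hp⟩)
      exact ⟨_, List.mem_append_right _ (List.mem_map.2 ⟨p, hseen, rfl⟩)⟩

theorem projP_append_completion (hwf : OneShotWF E) (hsnap : HasSnapshotPoints E) {p : Fin n}
    (hp : invRound E p < (snapshotRounds E).length) :
    projP (E ++ completion E) p = [.inv p (), .res p (view (invRound E) (retRound E p))] := by
  rw [projP_append, completion, projP_map_res]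
  by_cases h : ∃ s, Ev.res p s ∈ E
  · obtain ⟨s, hs⟩ := h
    obtain ⟨⟨⟩, hproj⟩ := hwf.projP_eq_of_res hs
    rw [hproj, if_neg fun h => (mem_seenPending.1 h).1 ⟨s, hs⟩, view_retRound hwf hsnap hs,
      List.append_nil]
  · obtain ⟨q, s, hqs, hps⟩ := exists_res_of_invRound_lt hp
    rw [hwf.projP_eq_of_not_res (hsnap.inv_mem hqs hps) h, if_pos (mem_seenPending.2 ⟨h, hp⟩),
      retRound, if_neg h]
    rfl

theorem extension_completion (hwf : OneShotWF E) (hsnap : HasSnapshotPoints E) :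
    Extension E (E ++ completion E) := by
  refine ⟨fun p => ?_, completion E, rfl, fun e he => isRes_of_mem_completion he⟩
  by_cases hp : invRound E p < (snapshotRounds E).length
  · exact Or.inr (Or.inr ⟨(), _, projP_append_completion hwf hsnap hp⟩)
  · rw [projP_append, completion, projP_map_res, if_neg fun h => hp (mem_seenPending.1 h).2,
      List.append_nil]
    exact hwf p

theorem projP_comp_completion (hwf : OneShotWF E) (hsnap : HasSnapshotPoints E) (p : Fin n) :
    projP (comp (E ++ completion E)) p =
      (if invRound E p < (snapshotRounds E).length then [.inv p ()] else []) ++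
        (if retRound E p < (snapshotRounds E).length then
          [.res p (view (invRound E) (retRound E p))] else []) := by
  have hA := isRoundAssignment hwf hsnap
  rw [projP_comp]
  by_cases hp : invRound E p < (snapshotRounds E).length
  · rw [if_pos ((exists_res_append_completion_iff hsnap).2 hp), if_pos hp,
      if_pos (hA.ret_lt_of_inv_lt p hp), projP_append_completion hwf hsnap hp]
    rfl
  · have := hA.inv_le_ret p
    rw [if_neg (mt (exists_res_append_completion_iff hsnap).1 hp), if_neg hp, if_neg (by omega)]
    rfl

end WriteSnapshot

open WriteSnapshot

/-- **The write-snapshot algorithm is interval-linearizable.** Any well-formed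
one-shot execution `E` in which each completed operation of `p_i`, returning
`set_i`, admits a time `t` strictly between its invocation and its response such
that `set_i` is exactly the set of indices whose invocations occur before `t`,
is interval-linearizable with respect to the write-snapshot object. -/
theorem write_snapshot_interval_linearizable (n : ℕ)
    (E : List (Ev (Fin n) Unit (Finset (Fin n))))
    (hwf : OneShotWF E)
    (hsnap : ∀ (i : Fin n) (s : Finset (Fin n)), Ev.res i s ∈ E →
      ∃ t : ℕ,
        (∃ a : ℕ, a < t ∧ E[a]? = some (Ev.inv i ())) ∧
        (∃ b : ℕ, t < b ∧ E[b]? = some (Ev.res i s)) ∧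
        (∀ j : Fin n, j ∈ s ↔ ∃ c : ℕ, c < t ∧ E[c]? = some (Ev.inv j ()))) :
    IntervalLin (wsObject n) E := by
  have hA := isRoundAssignment hwf hsnap
  refine ⟨E ++ completion E, roundHistory (invRound E) (retRound E) (snapshotRounds E).length,
    extension_completion hwf hsnap, roundHistory_mem_ISS hA, fun p => ?_,
    respects_roundHistory hA.inv_le_ret fun p q hpq => ?_⟩
  · rw [projP_comp_completion hwf hsnap, projPIS_roundHistory (hA.inv_le_ret p)]
  · exact retRound_lt_invRound_of_prec hwf hsnap
      ((hpq.of_sublist List.filter_sublist).of_append_responses fun _ => isRes_of_mem_completion)
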